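/- arXiv:2510.03899 — 7 statements merged into one kernel-verified Lean document; each statement's English description precedes it below -/
import Mathlib

section
/- Let T = (V, E) be a finite tree, λ a temporal labeling of T, and t ∈ V. If t is temporally reachable from a node u in the induced temporal graph T_λ, then t is temporally reachable in T_λ from every node lying on the unique path in T from u to t. Consequently, the set of nodes from which t is temporally reachable in T_λ induces a connected subtree of T containing t. -/
/-- A temporal path from `u` to `w`: `p` temporal edges with strictly increasing
timestamps. -/
def IsTemporalPath {V : Type*} (E : Set (Sym2 V × ℕ)) (u w : V)
    (p : ℕ) (vtx : Fin (p + 1) → V) (ts : Fin p → ℕ) : Prop :=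
  vtx 0 = u ∧ vtx (Fin.last p) = w ∧ StrictMono ts ∧
    ∀ i : Fin p, (s(vtx i.castSucc, vtx i.succ), ts i) ∈ E

/-- `w` is temporally reachable from `u`. -/
def TemporallyReachable {V : Type*} (E : Set (Sym2 V × ℕ)) (u w : V) : Prop :=
  u = w ∨ ∃ (p : ℕ) (vtx : Fin (p + 1) → V) (ts : Fin p → ℕ),
    IsTemporalPath E u w p vtx ts

/-- The temporal edges of the temporal graph `G_λ` induced by a temporal labeling `lab`
of the static graph `G`. -/
def inducedTemporalEdges {V : Type*} (G : SimpleGraph V) (lab : Sym2 V → Finset ℕ) :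
    Set (Sym2 V × ℕ) :=
  {q | q.1 ∈ G.edgeSet ∧ q.2 ∈ lab q.1}

/-!
A temporal path from `u` to `t` is in particular a walk from `u` to `t` in `T`, and each of its
vertices reaches `t` along the remaining suffix of the path. In a tree the unique path from `u`
to `t` uses only vertices of any walk from `u` to `t`, so all of its vertices reach `t`. Hence
every vertex that reaches `t` is joined to `t` by a path inside the reaching set, which is
therefore connected, and acyclic as an induced subgraph of a tree.
-/

open SimpleGraph

section TemporalPath

variable {V : Type*} {E : Set (Sym2 V × ℕ)} {u w : V}

lemma IsTemporalPath.eq_of_zero {vtx : Fin 1 → V} {ts : Fin 0 → ℕ}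
    (h : IsTemporalPath E u w 0 vtx ts) : u = w :=
  h.1.symm.trans h.2.1

lemma IsTemporalPath.tail {p : ℕ} {vtx : Fin (p + 2) → V} {ts : Fin (p + 1) → ℕ}
    (h : IsTemporalPath E u w (p + 1) vtx ts) :
    IsTemporalPath E (vtx 1) w p (vtx ∘ Fin.succ) (ts ∘ Fin.succ) := by
  obtain ⟨-, hlast, hmono, hedge⟩ := h
  refine ⟨rfl, ?_, hmono.comp Fin.strictMono_succ, fun i => ?_⟩
  · simpa only [Function.comp_apply, Fin.succ_last] using hlast
  · simpa only [Function.comp_apply, Fin.succ_castSucc] using hedge i.succ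

lemma IsTemporalPath.temporallyReachable {p : ℕ} {vtx : Fin (p + 1) → V} {ts : Fin p → ℕ}
    (h : IsTemporalPath E u w p vtx ts) (k : Fin (p + 1)) : TemporallyReachable E (vtx k) w := by
  induction p generalizing u with
  | zero => exact Or.inl (Fin.fin_one_eq_zero k ▸ h.2.1)
  | succ p ih =>
    induction k using Fin.cases with
    | zero => exact Or.inr ⟨p + 1, vtx, ts, h.1 ▸ h⟩
    | succ j => exact ih h.tail j

lemma IsTemporalPath.exists_walk_support_subset {G : SimpleGraph V} {lab : Sym2 V → Finset ℕ}
    {p : ℕ} {vtx : Fin (p + 1) → V} {ts : Fin p → ℕ}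
    (h : IsTemporalPath (inducedTemporalEdges G lab) u w p vtx ts) :
    ∃ q : G.Walk u w, ∀ x ∈ q.support, ∃ k, vtx k = x := by
  induction p generalizing u with
  | zero =>
    obtain rfl := h.eq_of_zero
    exact ⟨.nil, fun x hx => ⟨0, h.1.trans (Walk.mem_support_nil_iff.mp hx).symm⟩⟩
  | succ p ih =>
    obtain ⟨q, hq⟩ := ih h.tail
    have hadj : G.Adj u (vtx 1) := h.1 ▸ (h.2.2.2 0).1
    refine ⟨.cons hadj q, fun x hx => ?_⟩
    rw [Walk.support_cons, List.mem_cons] at hx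
    rcases hx with rfl | hx
    · exact ⟨0, h.1⟩
    · obtain ⟨k, rfl⟩ := hq x hx
      exact ⟨k.succ, rfl⟩

lemma TemporallyReachable.exists_walk {G : SimpleGraph V} {lab : Sym2 V → Finset ℕ}
    (h : TemporallyReachable (inducedTemporalEdges G lab) u w) :
    ∃ q : G.Walk u w, ∀ x ∈ q.support,
      TemporallyReachable (inducedTemporalEdges G lab) x w := by
  rcases h with rfl | ⟨p, vtx, ts, hpath⟩
  · exact ⟨.nil, fun x hx => Or.inl (Walk.mem_support_nil_iff.mp hx)⟩
  · obtain ⟨q, hq⟩ := hpath.exists_walk_support_subset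
    refine ⟨q, fun x hx => ?_⟩
    obtain ⟨k, rfl⟩ := hq x hx
    exact hpath.temporallyReachable k

end TemporalPath

namespace SimpleGraph

variable {V : Type*} {G : SimpleGraph V}

lemma IsAcyclic.support_subset_of_isPath (hG : G.IsAcyclic) {u v : V} {p : G.Walk u v}
    (hp : p.IsPath) (q : G.Walk u v) : p.support ⊆ q.support := by
  classical
  have hpq : p = q.bypass :=
    congrArg Subtype.val ((hG.subsingleton_path u v).elim ⟨p, hp⟩ ⟨_, q.bypass_isPath⟩)
  exact hpq ▸ q.support_bypass_subset_support

lemma induce_connected_of_forall_exists_walk_support_subset {s : Set V} {t : V} (ht : t ∈ s)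
    (h : ∀ v ∈ s, ∃ q : G.Walk v t, ∀ x ∈ q.support, x ∈ s) : (G.induce s).Connected :=
  induce_connected_of_patches t ht fun {v} hv => by
    obtain ⟨q, hq⟩ := h v hv
    exact ⟨_, hq, q.end_mem_support, q.start_mem_support,
      q.connected_induce_support.preconnected _ _⟩

end SimpleGraph

lemma TemporallyReachable.of_mem_support_of_isPath {V : Type*} {G : SimpleGraph V}
    (hG : G.IsAcyclic) {lab : Sym2 V → Finset ℕ} {u v t : V}
    (hu : TemporallyReachable (inducedTemporalEdges G lab) u t) {W : G.Walk u t} (hW : W.IsPath)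
    (hv : v ∈ W.support) : TemporallyReachable (inducedTemporalEdges G lab) v t := by
  obtain ⟨q, hq⟩ := hu.exists_walk
  exact hq v (hG.support_subset_of_isPath hW q hv)

theorem tree_reachable_set_connected_general {V : Type*} (T : SimpleGraph V)
    (hT : T.IsTree) (lab : Sym2 V → Finset ℕ) (t : V) :
    (∀ u : V, TemporallyReachable (inducedTemporalEdges T lab) u t →
      ∀ (W : T.Walk u t), W.IsPath →
        ∀ v ∈ W.support, TemporallyReachable (inducedTemporalEdges T lab) v t) ∧
    t ∈ {v : V | TemporallyReachable (inducedTemporalEdges T lab) v t} ∧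
    (SimpleGraph.induce {v : V | TemporallyReachable (inducedTemporalEdges T lab) v t}
      T).IsTree := by
  have ht : TemporallyReachable (inducedTemporalEdges T lab) t t := Or.inl rfl
  refine ⟨fun _ hu _ hW _ hv => hu.of_mem_support_of_isPath hT.isAcyclic hW hv, ht,
    ?_, hT.isAcyclic.induce _⟩
  refine induce_connected_of_forall_exists_walk_support_subset ht fun v hv => ?_
  obtain ⟨W, hW⟩ := hT.connected.preconnected.exists_isPath v t
  exact ⟨W, fun _ hx => TemporallyReachable.of_mem_support_of_isPath hT.isAcyclic hv hW hx⟩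

/-- in a finite tree `T` with temporal labeling `lab` and node `t`, if `t`
is temporally reachable from `u` in `T_λ`, then `t` is temporally reachable from every
node on the unique path from `u` to `t`; consequently the set of nodes from which `t` is
temporally reachable contains `t` and induces a connected subtree of `T`. -/
theorem tree_reachable_set_connected {V : Type*} [Fintype V] (T : SimpleGraph V)
    (hT : T.IsTree) (lab : Sym2 V → Finset ℕ) (t : V) :
    (∀ u : V, TemporallyReachable (inducedTemporalEdges T lab) u t →
      ∀ (W : T.Walk u t), W.IsPath →
        ∀ v ∈ W.support, TemporallyReachable (inducedTemporalEdges T lab) v t) ∧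
    t ∈ {v : V | TemporallyReachable (inducedTemporalEdges T lab) v t} ∧
    (SimpleGraph.induce {v : V | TemporallyReachable (inducedTemporalEdges T lab) v t}
      T).IsTree :=
  tree_reachable_set_connected_general T hT lab t
end

section
/- Let T = (V, E) be a finite tree rooted at t with height H, and let S be a connected subtree of T containing t. Define the temporal labeling λ that assigns to each edge of S joining a node at depth d ≥ 1 to its parent at depth d − 1 the single timestamp H − d + 1, and the empty set to every other edge of T. Then λ has cost |λ| equal to the number of edges of S, and in the induced temporal graph T_λ the root t is temporally reachable from every node of S. -/
namespace SimpleGraph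

variable {V : Type*} {G : SimpleGraph V}

theorem sum_card_eq_ncard_of_card_eq_one [Fintype G.edgeSet] {P : Sym2 V → Prop}
    {lab : Sym2 V → Finset ℕ} (h₁ : ∀ e ∈ G.edgeSet, P e → (lab e).card = 1)
    (h₂ : ∀ e ∈ G.edgeSet, ¬P e → lab e = ∅) :
    ∑ e ∈ G.edgeFinset, (lab e).card = {e | e ∈ G.edgeSet ∧ P e}.ncard := by
  classical
  have hcard : ∀ e ∈ G.edgeFinset, (lab e).card = if P e then 1 else 0 := by
    intro e he
    rw [mem_edgeFinset] at he
    split_ifs with h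
    · exact h₁ e he h
    · simp [h₂ e he h]
  have hset : {e | e ∈ G.edgeSet ∧ P e} = ↑(G.edgeFinset.filter P) := by
    ext e
    simp
  rw [Finset.sum_congr rfl hcard, Finset.sum_boole, hset, Set.ncard_coe_finset, Nat.cast_id]

theorem IsAcyclic.length_eq_dist_of_isPath (hG : G.IsAcyclic) {u v : V} {p : G.Walk u v}
    (hp : p.IsPath) : p.length = G.dist u v := by
  obtain ⟨q, hq, hlen⟩ := p.reachable.exists_path_of_dist
  obtain rfl : p = q := congrArg Subtype.val ((hG.subsingleton_path u v).elim ⟨p, hp⟩ ⟨q, hq⟩)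
  exact hlen

theorem Walk.dist_getVert_of_length_eq_dist {u t : V} (p : G.Walk u t)
    (hp : p.length = G.dist u t) (i : ℕ) : G.dist (p.getVert i) t = p.length - i := by
  induction p generalizing i with
  | nil => simp
  | @cons u v t hadj q ih =>
    have hq : q.length = G.dist v t := by
      refine le_antisymm ?_ (dist_le q)
      obtain ⟨r, hr⟩ := q.reachable.exists_walk_length_eq_dist
      have := dist_le (Walk.cons hadj r)
      simp only [Walk.length_cons] at hp this
      omega
    cases i with
    | zero => simpa using hp.symm
    | succ i => simp [ih hq i]

theorem exists_isPath_support_subset_of_connected_induce {s : Set V}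
    (hs : (G.induce s).Connected) {u v : V} (hu : u ∈ s) (hv : v ∈ s) :
    ∃ p : G.Walk u v, p.IsPath ∧ ∀ x ∈ p.support, x ∈ s := by
  classical
  obtain ⟨q⟩ := hs ⟨u, hu⟩ ⟨v, hv⟩
  set q' := q.map (Embedding.induce s).toHom
  refine ⟨q'.bypass, q'.bypass_isPath, fun x hx => ?_⟩
  have hx' := q'.support_bypass_subset_support hx
  rw [Walk.support_map, List.mem_map] at hx'
  obtain ⟨⟨y, hy⟩, -, rfl⟩ := hx'
  exact hy

end SimpleGraph

theorem temporallyReachable_of_walk {V : Type*} {G : SimpleGraph V} {E : Set (Sym2 V × ℕ)}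
    {u w : V} (p : G.Walk u w) {ts : ℕ → ℕ} (hts : StrictMono ts)
    (hE : ∀ i < p.length, (s(p.getVert i, p.getVert (i + 1)), ts i) ∈ E) :
    TemporallyReachable E u w :=
  Or.inr ⟨p.length, fun i => p.getVert i, fun i => ts i, by simp, by simp,
    hts.comp Fin.val_strictMono, fun i => hE i i.isLt⟩

theorem subtree_labeling_cost_and_reach_general {V : Type*} [Fintype V] [DecidableEq V]
    (T : SimpleGraph V) [DecidableRel T.Adj] (hT : T.IsTree) (t : V) (H : ℕ)
    (hH : ∀ v : V, T.dist v t ≤ H)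
    (s : Finset V) (hts : t ∈ s)
    (hconn : (SimpleGraph.induce (s : Set V) T).Connected)
    (lab : Sym2 V → Finset ℕ)
    (hlab₁ : ∀ e ∈ T.edgeSet, (∀ x ∈ e, x ∈ s) →
      lab e = {H - Sym2.lift ⟨fun x y => max (T.dist x t) (T.dist y t),
        fun x y => max_comm _ _⟩ e + 1})
    (hlab₂ : ∀ e : Sym2 V, (e ∉ T.edgeSet ∨ ¬(∀ x ∈ e, x ∈ s)) → lab e = ∅) :
    (∑ e ∈ T.edgeFinset, (lab e).card)
        = Set.ncard {e : Sym2 V | e ∈ T.edgeSet ∧ ∀ x ∈ e, x ∈ s} ∧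
    ∀ v ∈ s, TemporallyReachable (inducedTemporalEdges T lab) v t := by
  refine ⟨SimpleGraph.sum_card_eq_ncard_of_card_eq_one
    (fun e he hs => by simp [hlab₁ e he hs]) (fun e _ hs => hlab₂ e (Or.inr hs)),
    fun v hv => ?_⟩
  obtain ⟨p, hp, hps⟩ :=
    SimpleGraph.exists_isPath_support_subset_of_connected_induce hconn hv hts
  have hgeodesic := hT.isAcyclic.length_eq_dist_of_isPath hp
  have hdepth := p.dist_getVert_of_length_eq_dist hgeodesic
  have hkH : p.length ≤ H := hgeodesic ▸ hH v
  refine temporallyReachable_of_walk p (ts := fun i => H - p.length + i + 1)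
    (fun a b hab => by dsimp only; omega) fun i hi => ⟨p.adj_getVert_succ hi, ?_⟩
  have hin : ∀ x ∈ s(p.getVert i, p.getVert (i + 1)), x ∈ s := by
    simp only [Sym2.mem_iff]
    rintro x (rfl | rfl) <;> exact hps _ (p.getVert_mem_support _)
  simp only [hlab₁ _ (p.adj_getVert_succ hi) hin, Sym2.lift_mk, hdepth, Finset.mem_singleton]
  omega

/-- let `T` be a finite tree rooted at `t` of height `H` (depth of a node
`v` is `T.dist v t`), and let `s` be (the vertex set of) a connected subtree of `T`
containing `t`.  The labeling `lab` assigns to each edge of the subtree joining a node at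
depth `d ≥ 1` to its parent at depth `d - 1` (so the deeper endpoint has depth
`d = max` of the two endpoint depths) the single timestamp `H - d + 1`, and `∅` to every
other edge.  Then the cost of `lab` equals the number of edges of the subtree, and in the
induced temporal graph the root `t` is temporally reachable from every node of `s`. -/
theorem subtree_labeling_cost_and_reach {V : Type*} [Fintype V] [DecidableEq V]
    (T : SimpleGraph V) [DecidableRel T.Adj] (hT : T.IsTree) (t : V) (H : ℕ)
    (hH : ∀ v : V, T.dist v t ≤ H) (hHmax : ∃ v : V, T.dist v t = H)
    (s : Finset V) (hts : t ∈ s)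
    (hconn : (SimpleGraph.induce (s : Set V) T).Connected)
    (lab : Sym2 V → Finset ℕ)
    (hlab₁ : ∀ e ∈ T.edgeSet, (∀ x ∈ e, x ∈ s) →
      lab e = {H - Sym2.lift ⟨fun x y => max (T.dist x t) (T.dist y t),
        fun x y => max_comm _ _⟩ e + 1})
    (hlab₂ : ∀ e : Sym2 V, (e ∉ T.edgeSet ∨ ¬(∀ x ∈ e, x ∈ s)) → lab e = ∅) :
    (∑ e ∈ T.edgeFinset, (lab e).card)
        = Set.ncard {e : Sym2 V | e ∈ T.edgeSet ∧ ∀ x ∈ e, x ∈ s} ∧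
    ∀ v ∈ s, TemporallyReachable (inducedTemporalEdges T lab) v t :=
  subtree_labeling_cost_and_reach_general T hT t H hH s hts hconn lab hlab₁ hlab₂
end

section
/- For every node v of T, the exact label set L_v computed by the bottom-up dynamic program satisfies: (i) for every label (b, r, c) ∈ L_v there exists a v-subtree S with b(S) = b, r(S) = r, and w(S) = c; and (ii) for every v-subtree S there exists a label (b(S), r(S), c) ∈ L_v with c ≤ w(S). -/
/-- A DP label `(b, r, c)`: counts of blue and red nodes covered, and cost. -/
abbrev DPLabel : Type := ℕ × ℕ × ℝ

/-- A finite tree rooted at `root`, given by a parent function together with a depth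
function certifying acyclicity. -/
structure FMLTree (V : Type*) where
  root : V
  parent : V → V
  depth : V → ℕ
  parent_root : parent root = root
  depth_root : depth root = 0
  depth_parent : ∀ v, v ≠ root → depth (parent v) + 1 = depth v

/-- The children of `v`. -/
def FMLTree.children {V : Type*} [Fintype V] [DecidableEq V]
    (T : FMLTree V) (v : V) : Finset V :=
  Finset.univ.filter fun u => u ≠ T.root ∧ T.parent u = v

/-- `x` lies in the subtree `T_v` rooted at `v` (i.e. `v` is an ancestor of `x`). -/
def FMLTree.IsDesc {V : Type*} (T : FMLTree V) (v x : V) : Prop :=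
  ∃ k : ℕ, T.parent^[k] x = v

/-- A `v`-subtree: a connected subgraph of `T_v` containing `v`, given by its vertex
set `S`. -/
def IsVSubtree {V : Type*} (T : FMLTree V) (v : V) (S : Finset V) : Prop :=
  v ∈ S ∧ (∀ x ∈ S, T.IsDesc v x) ∧ ∀ x ∈ S, x ≠ v → T.parent x ∈ S

/-- `b(S)`: the number of blue nodes of `S` (`col x = some true` means blue,
`col x = some false` means red, `col x = none` means uncolored). -/
def blueCount {V : Type*} [DecidableEq V] (col : V → Option Bool) (S : Finset V) : ℕ :=
  (S.filter fun x => col x = some true).card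

/-- `r(S)`: the number of red nodes of `S`. -/
def redCount {V : Type*} [DecidableEq V] (col : V → Option Bool) (S : Finset V) : ℕ :=
  (S.filter fun x => col x = some false).card

/-- `w(S)`: the total weight of the edges of a `v`-subtree `S`, where `w x` is the weight
of the edge joining `x` to its parent. -/
def subtreeWeight {V : Type*} [DecidableEq V] (w : V → ℝ) (v : V) (S : Finset V) : ℝ :=
  ∑ x ∈ S.erase v, w x

/-- The candidate labels at node `v`, formed from label sets `L u` at the children `u`
of `v`: choose for each child either nothing or one label `(b_u, r_u, c_u) ∈ L u`,
contributing `(b_u, r_u, c_u + w({v,u}))`, sum the chosen contributions coordinatewise,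
and add `(1,0,0)` if `v` is blue and `(0,1,0)` if `v` is red. -/
def candidates {V : Type*} [Fintype V] [DecidableEq V] (T : FMLTree V)
    (col : V → Option Bool) (w : V → ℝ) (L : V → Set DPLabel) (v : V) : Set DPLabel :=
  { l | ∃ choice : V → Option DPLabel,
      (∀ u, u ∉ T.children v → choice u = none) ∧
      (∀ u l', choice u = some l' → l' ∈ L u) ∧
      l.1 = (∑ u ∈ T.children v, ((choice u).map Prod.fst).getD 0)
              + (if col v = some true then 1 else 0) ∧
      l.2.1 = (∑ u ∈ T.children v, ((choice u).map fun l' => l'.2.1).getD 0)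
              + (if col v = some false then 1 else 0) ∧
      l.2.2 = ∑ u ∈ T.children v, ((choice u).map fun l' => l'.2.2 + w u).getD 0 }

/-- `L` is the family of exact label sets computed by the bottom-up dynamic program:
at every node `v`, every label of `L v` is a candidate; among the candidates with the
same pair `(b, r)` only one of minimum cost is retained; and every candidate is
dominated by a retained label with the same `(b, r)` and no larger cost. -/
def IsExactDP {V : Type*} [Fintype V] [DecidableEq V] (T : FMLTree V)
    (col : V → Option Bool) (w : V → ℝ) (L : V → Set DPLabel) : Prop :=
  ∀ v : V,
    L v ⊆ candidates T col w L v ∧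
    (∀ l ∈ L v, ∀ l' ∈ candidates T col w L v,
      l'.1 = l.1 → l'.2.1 = l.2.1 → l.2.2 ≤ l'.2.2) ∧
    (∀ l' ∈ candidates T col w L v,
      ∃ l ∈ L v, l.1 = l'.1 ∧ l.2.1 = l'.2.1 ∧ l.2.2 ≤ l'.2.2)

/-! Both parts go by induction from the leaves up. A `v`-subtree is exactly `v` with
`u`-subtrees of some children `u` hung below it (`graft`), and its (blue, red, weight) label
is then the candidate combined from the labels of the pieces. For (i), a label of `L v` is a
candidate, its child labels are realized by induction, and grafting the realizing subtrees
realizes it. For (ii), decompose the subtree, dominate each piece by induction, and dominate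
the resulting candidate by a label of `L v`. -/

namespace FMLTree

variable {V : Type*} (T : FMLTree V)

theorem iterate_parent_root (k : ℕ) : T.parent^[k] T.root = T.root :=
  Function.iterate_fixed T.parent_root k

theorem depth_eq_add_of_iterate_parent {k : ℕ} {x u : V} (h : T.parent^[k] x = u)
    (hu : u ≠ T.root) : T.depth x = T.depth u + k := by
  induction k generalizing x with
  | zero => subst h; rfl
  | succ k ih =>
    rw [Function.iterate_succ_apply] at h
    have hx : x ≠ T.root := by
      rintro rfl
      rw [T.parent_root, T.iterate_parent_root] at h
      exact hu h.symm
    have := T.depth_parent x hx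
    have := ih h
    omega

theorem IsDesc.refl (v : V) : T.IsDesc v v := ⟨0, rfl⟩

variable {T}

theorem IsDesc.of_parent {u x : V} (h : T.IsDesc u x) : T.IsDesc (T.parent u) x := by
  obtain ⟨k, hk⟩ := h
  exact ⟨k + 1, by rw [Function.iterate_succ_apply', hk]⟩

theorem IsDesc.parent {u x : V} (h : T.IsDesc u x) (hx : x ≠ u) : T.IsDesc u (T.parent x) := by
  obtain ⟨_ | k, hk⟩ := h
  · exact absurd hk hx
  · exact ⟨k, hk⟩

section Children

variable [Fintype V] [DecidableEq V]

theorem mem_children {v u : V} : u ∈ T.children v ↔ u ≠ T.root ∧ T.parent u = v := by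
  simp [children]

theorem depth_of_mem_children {v u : V} (hu : u ∈ T.children v) :
    T.depth u = T.depth v + 1 := by
  obtain ⟨hur, rfl⟩ := mem_children.1 hu
  exact (T.depth_parent u hur).symm

theorem not_isDesc_of_mem_children {v u : V} (hu : u ∈ T.children v) : ¬ T.IsDesc u v := by
  rintro ⟨k, hk⟩
  have := T.depth_eq_add_of_iterate_parent hk (mem_children.1 hu).1
  have := depth_of_mem_children hu
  omega

theorem eq_of_isDesc_of_mem_children {v u u' x : V} (hu : u ∈ T.children v)
    (hu' : u' ∈ T.children v) (h : T.IsDesc u x) (h' : T.IsDesc u' x) : u = u' := by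
  obtain ⟨k, rfl⟩ := h
  obtain ⟨k', rfl⟩ := h'
  have := T.depth_eq_add_of_iterate_parent rfl (mem_children.1 hu).1
  have := T.depth_eq_add_of_iterate_parent rfl (mem_children.1 hu').1
  have := depth_of_mem_children hu
  have := depth_of_mem_children hu'
  obtain rfl : k = k' := by omega
  rfl

theorem childrenInduction {motive : V → Prop}
    (ih : ∀ v, (∀ u ∈ T.children v, motive u) → motive v) (v : V) : motive v := by
  let M := Finset.univ.sup T.depth
  induction v using (measure fun v => M - T.depth v).wf.induction with
  | _ v IH =>
  refine ih v fun u hu => IH u ?_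
  have := depth_of_mem_children hu
  have : T.depth u ≤ M := Finset.le_sup (Finset.mem_univ u)
  change M - T.depth u < M - T.depth v
  omega

end Children

end FMLTree

open Finset

section Labels

variable {V : Type*}

def combineLabels (col : V → Option Bool) (w : V → ℝ) (v : V) (C : Finset V)
    (lab : V → DPLabel) : DPLabel :=
  ((∑ u ∈ C, (lab u).1) + if col v = some true then 1 else 0,
    (∑ u ∈ C, (lab u).2.1) + if col v = some false then 1 else 0,
    ∑ u ∈ C, ((lab u).2.2 + w u))

theorem combineLabels_congr {col : V → Option Bool} {w : V → ℝ} {v : V} {C : Finset V}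
    {lab lab' : V → DPLabel} (h : ∀ u ∈ C, lab u = lab' u) :
    combineLabels col w v C lab = combineLabels col w v C lab' := by
  simp +contextual only [combineLabels, h]

variable [DecidableEq V]

def graft (v : V) (C : Finset V) (g : V → Finset V) : Finset V := insert v (C.biUnion g)

def subtreeLabel (col : V → Option Bool) (w : V → ℝ) (v : V) (S : Finset V) : DPLabel :=
  (blueCount col S, redCount col S, subtreeWeight w v S)

variable {v : V} {C : Finset V} {g : V → Finset V}

theorem card_filter_graft (hv : v ∉ C.biUnion g) (hdisj : (C : Set V).PairwiseDisjoint g)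
    (p : V → Prop) [DecidablePred p] :
    ((graft v C g).filter p).card =
      (∑ u ∈ C, ((g u).filter p).card) + if p v then 1 else 0 := by
  simp only [graft, card_filter, sum_insert hv, sum_biUnion hdisj, add_comm]

theorem subtreeWeight_graft (w : V → ℝ) (hv : v ∉ C.biUnion g)
    (hdisj : (C : Set V).PairwiseDisjoint g) (hmem : ∀ u ∈ C, u ∈ g u) :
    subtreeWeight w v (graft v C g) = ∑ u ∈ C, (subtreeWeight w u (g u) + w u) := by
  rw [subtreeWeight, graft, erase_insert hv, sum_biUnion hdisj]
  exact sum_congr rfl fun u hu => (sum_erase_add _ _ (hmem u hu)).symm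

theorem subtreeLabel_graft (col : V → Option Bool) (w : V → ℝ) (hv : v ∉ C.biUnion g)
    (hdisj : (C : Set V).PairwiseDisjoint g) (hmem : ∀ u ∈ C, u ∈ g u) :
    subtreeLabel col w v (graft v C g) =
      combineLabels col w v C fun u => subtreeLabel col w u (g u) := by
  simp only [subtreeLabel, combineLabels, blueCount, redCount, card_filter_graft hv hdisj,
    subtreeWeight_graft w hv hdisj hmem]

end Labels

section Subtrees

open FMLTree

variable {V : Type*} [Fintype V] [DecidableEq V] {T : FMLTree V} {v : V}

theorem IsVSubtree.exists_child_isDesc {S : Finset V} (hS : IsVSubtree T v S) {x : V}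
    (hx : x ∈ S) (hxv : x ≠ v) : ∃ u ∈ T.children v, u ∈ S ∧ T.IsDesc u x := by
  obtain ⟨k, hk⟩ := hS.2.1 x hx
  induction k generalizing x with
  | zero => exact absurd hk hxv
  | succ k ih =>
    rw [Function.iterate_succ_apply] at hk
    by_cases hpx : T.parent x = v
    · refine ⟨x, mem_children.2 ⟨?_, hpx⟩, hx, IsDesc.refl T x⟩
      rintro rfl
      exact hxv (T.parent_root ▸ hpx)
    · obtain ⟨u, hu, huS, k', hk'⟩ := ih (hS.2.2 x hx hxv) hpx hk
      exact ⟨u, hu, huS, k' + 1, hk'⟩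

variable {C : Finset V} {g : V → Finset V}

theorem isVSubtree_graft (hC : C ⊆ T.children v) (hg : ∀ u ∈ C, IsVSubtree T u (g u)) :
    IsVSubtree T v (graft v C g) := by
  refine ⟨mem_insert_self _ _, fun x hx => ?_, fun x hx hxv => ?_⟩ <;>
    obtain rfl | hx := mem_insert.1 hx
  · exact IsDesc.refl T x
  · obtain ⟨u, hu, hxu⟩ := mem_biUnion.1 hx
    exact (mem_children.1 (hC hu)).2 ▸ ((hg u hu).2.1 x hxu).of_parent
  · exact absurd rfl hxv
  · obtain ⟨u, hu, hxu⟩ := mem_biUnion.1 hx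
    by_cases hx : x = u
    · subst hx
      exact (mem_children.1 (hC hu)).2 ▸ mem_insert_self _ _
    · exact mem_insert_of_mem (mem_biUnion.2 ⟨u, hu, (hg u hu).2.2 x hxu hx⟩)

theorem subtreeLabel_graft_of_isVSubtree (col : V → Option Bool) (w : V → ℝ)
    (hC : C ⊆ T.children v) (hg : ∀ u ∈ C, IsVSubtree T u (g u)) :
    subtreeLabel col w v (graft v C g) =
      combineLabels col w v C fun u => subtreeLabel col w u (g u) := by
  refine subtreeLabel_graft col w ?_ ?_ fun u hu => (hg u hu).1
  · simp only [mem_biUnion, not_exists, not_and]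
    exact fun u hu hv => not_isDesc_of_mem_children (hC hu) ((hg u hu).2.1 v hv)
  · intro u hu u' hu' hne
    exact disjoint_left.2 fun x hx hx' => hne <| eq_of_isDesc_of_mem_children (hC hu) (hC hu')
      ((hg u hu).2.1 x hx) ((hg u' hu').2.1 x hx')

theorem IsVSubtree.exists_eq_graft {S : Finset V} (hS : IsVSubtree T v S) :
    ∃ C ⊆ T.children v, ∃ g : V → Finset V,
      (∀ u ∈ C, IsVSubtree T u (g u)) ∧ S = graft v C g := by
  classical
  refine ⟨(T.children v).filter (· ∈ S), filter_subset _ _, fun u => S.filter (T.IsDesc u),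
    fun u hu => ?_, ?_⟩
  · obtain ⟨hu, huS⟩ := mem_filter.1 hu
    refine ⟨mem_filter.2 ⟨huS, IsDesc.refl T u⟩, fun x hx => (mem_filter.1 hx).2,
      fun x hx hxu => ?_⟩
    obtain ⟨hxS, hux⟩ := mem_filter.1 hx
    have hxv : x ≠ v := by
      rintro rfl
      exact not_isDesc_of_mem_children hu hux
    exact mem_filter.2 ⟨hS.2.2 x hxS hxv, hux.parent hxu⟩
  · ext x
    refine ⟨fun hx => ?_, fun hx => ?_⟩
    · by_cases hxv : x = v
      · exact hxv ▸ mem_insert_self _ _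
      obtain ⟨u, hu, huS, hux⟩ := hS.exists_child_isDesc hx hxv
      exact mem_insert_of_mem <|
        mem_biUnion.2 ⟨u, mem_filter.2 ⟨hu, huS⟩, mem_filter.2 ⟨hx, hux⟩⟩
    · obtain rfl | hx := mem_insert.1 hx
      · exact hS.1
      · obtain ⟨u, -, hxu⟩ := mem_biUnion.1 hx
        exact (mem_filter.1 hxu).1

end Subtrees

section DP

open FMLTree

variable {V : Type*} [Fintype V] [DecidableEq V] {T : FMLTree V} {col : V → Option Bool}
  {w : V → ℝ} {L : V → Set DPLabel} {v : V}

theorem mem_candidates_iff {l : DPLabel} :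
    l ∈ candidates T col w L v ↔ ∃ C ⊆ T.children v, ∃ lab : V → DPLabel,
      (∀ u ∈ C, lab u ∈ L u) ∧ combineLabels col w v C lab = l := by
  constructor
  · rintro ⟨choice, -, hchoice, hb, hr, hc⟩
    let C := (T.children v).filter fun u => (choice u).isSome
    have hsum {M : Type} [AddCommMonoid M] (f : V → DPLabel → M) :
        ∑ u ∈ T.children v, ((choice u).map (f u)).getD 0 =
          ∑ u ∈ C, f u ((choice u).getD 0) := by
      rw [sum_filter]
      refine sum_congr rfl fun u _ => ?_
      cases choice u <;> rfl
    refine ⟨C, filter_subset _ _, fun u => (choice u).getD 0, fun u hu => ?_, ?_⟩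
    · obtain ⟨l', hl'⟩ := Option.isSome_iff_exists.1 (mem_filter.1 hu).2
      simpa [hl'] using hchoice u l' hl'
    · rw [hsum (fun _ => Prod.fst)] at hb
      rw [hsum (fun _ l' => l'.2.1)] at hr
      rw [hsum (fun u l' => l'.2.2 + w u)] at hc
      ext <;> simp only [combineLabels, hb, hr, hc]
  · rintro ⟨C, hC, lab, hlab, rfl⟩
    have hsum {M : Type} [AddCommMonoid M] (f : V → DPLabel → M) :
        ∑ u ∈ T.children v, ((if u ∈ C then some (lab u) else none).map (f u)).getD 0 =
          ∑ u ∈ C, f u (lab u) := by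
      rw [← sum_subset hC fun u _ hu => by simp [hu]]
      exact sum_congr rfl fun u hu => by simp [hu]
    refine ⟨fun u => if u ∈ C then some (lab u) else none, fun u hu => if_neg (hu <| hC ·),
      fun u l' hl' => ?_, ?_, ?_, ?_⟩
    · dsimp only at hl'
      split_ifs at hl' with hu
      · exact Option.some_inj.1 hl' ▸ hlab u hu
    · exact (congrArg (· + _) (hsum fun _ => Prod.fst)).symm
    · exact (congrArg (· + _) (hsum fun _ l' => l'.2.1)).symm
    · exact (hsum fun u l' => l'.2.2 + w u).symm

variable (hL : IsExactDP T col w L)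
include hL

theorem exists_isVSubtree_subtreeLabel_eq (v : V) :
    ∀ l ∈ L v, ∃ S, IsVSubtree T v S ∧ subtreeLabel col w v S = l := by
  induction v using T.childrenInduction with
  | ih v ih =>
  intro l hl
  obtain ⟨C, hC, lab, hlab, rfl⟩ := mem_candidates_iff.1 ((hL v).1 hl)
  choose! g hg hgl using fun u hu => ih u (hC hu) (lab u) (hlab u hu)
  refine ⟨graft v C g, isVSubtree_graft hC hg, ?_⟩
  rw [subtreeLabel_graft_of_isVSubtree col w hC hg]
  exact combineLabels_congr hgl

theorem exists_le_subtreeWeight_mem (v : V) :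
    ∀ S, IsVSubtree T v S →
      ∃ c ≤ subtreeWeight w v S, (blueCount col S, redCount col S, c) ∈ L v := by
  induction v using T.childrenInduction with
  | ih v ih =>
  intro S hS
  obtain ⟨C, hC, g, hg, rfl⟩ := hS.exists_eq_graft
  choose! c hc hcL using fun u hu => ih u (hC hu) (g u) (hg u hu)
  obtain ⟨l, hl, hb, hr, hle⟩ := (hL v).2.2 _ <| mem_candidates_iff.2
    ⟨C, hC, fun u => (blueCount col (g u), redCount col (g u), c u), hcL, rfl⟩
  have hlabel := subtreeLabel_graft_of_isVSubtree col w hC hg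
  simp only [subtreeLabel, Prod.ext_iff, combineLabels] at hlabel hb hr hle
  refine ⟨l.2.2, ?_, ?_⟩
  · rw [hlabel.2.2]
    exact hle.trans (sum_le_sum fun u hu => add_le_add_left (hc u hu) _)
  · rwa [hlabel.1, hlabel.2.1, ← hb, ← hr]

end DP

theorem exactDP_correct_general {V : Type*} [Fintype V] [DecidableEq V] (T : FMLTree V)
    (col : V → Option Bool) (w : V → ℝ)
    (L : V → Set DPLabel) (hL : IsExactDP T col w L) (v : V) :
    (∀ l ∈ L v, ∃ S : Finset V, IsVSubtree T v S ∧
      blueCount col S = l.1 ∧ redCount col S = l.2.1 ∧ subtreeWeight w v S = l.2.2) ∧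
    (∀ S : Finset V, IsVSubtree T v S →
      ∃ c : ℝ, c ≤ subtreeWeight w v S ∧
        (blueCount col S, redCount col S, c) ∈ L v) := by
  refine ⟨fun l hl => ?_, exists_le_subtreeWeight_mem hL v⟩
  obtain ⟨S, hS, rfl⟩ := exists_isVSubtree_subtreeLabel_eq hL v l hl
  exact ⟨S, hS, rfl, rfl, rfl⟩

/-- for every node `v` of `T`, the exact label set `L v` satisfies:
(i) every label `(b, r, c) ∈ L v` is realized by a `v`-subtree `S` with `b(S) = b`,
`r(S) = r`, `w(S) = c`; and (ii) for every `v`-subtree `S` there is a label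
`(b(S), r(S), c) ∈ L v` with `c ≤ w(S)`. -/
theorem exactDP_correct {V : Type*} [Fintype V] [DecidableEq V] (T : FMLTree V)
    (col : V → Option Bool) (w : V → ℝ) (hw : ∀ u, u ≠ T.root → 1 ≤ w u)
    (L : V → Set DPLabel) (hL : IsExactDP T col w L) (v : V) :
    (∀ l ∈ L v, ∃ S : Finset V, IsVSubtree T v S ∧
      blueCount col S = l.1 ∧ redCount col S = l.2.1 ∧ subtreeWeight w v S = l.2.2) ∧
    (∀ S : Finset V, IsVSubtree T v S →
      ∃ c : ℝ, c ≤ subtreeWeight w v S ∧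
        (blueCount col S, redCount col S, c) ∈ L v) :=
  exactDP_correct_general T col w L hL v
end

section
/- Fix ε > 0. For every node v of T at height h_v and every exact label (b, r, c) ∈ L_v, there exists a label (b', r', c') in the bucketed label set L'_v with c' ≤ c, b' ≥ b/(1+ε)^{h_v+1}, and r' ≥ r/(1+ε)^{h_v+1}. -/
/-- The height `h_v` of the subtree `T_v` rooted at `v`. -/
noncomputable def FMLTree.heightOf {V : Type*} (T : FMLTree V) (v : V) : ℕ :=
  sSup {k : ℕ | ∃ x, T.IsDesc v x ∧ T.depth x = T.depth v + k}

/-- The bucket index of `x : ℕ`: `0` for `x = 0`, and otherwise the least `i ≥ 1` with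
`x ≤ (1+ε)^i`. -/
noncomputable def bucketIndex (ε : ℝ) (x : ℕ) : ℕ :=
  if x = 0 then 0 else sInf {i : ℕ | 1 ≤ i ∧ (x : ℝ) ≤ (1 + ε) ^ i}

/-- `L'` is the family of bucketed label sets computed by the geometric-bucketing
bottom-up dynamic program: candidates are formed exactly as in the exact DP but from the
bucketed label sets of the children, and for each pair of bucket indices only one
candidate of minimum cost is retained. -/
def IsBucketDP {V : Type*} [Fintype V] [DecidableEq V] (ε : ℝ) (T : FMLTree V)
    (col : V → Option Bool) (w : V → ℝ) (L' : V → Set DPLabel) : Prop :=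
  ∀ v : V,
    L' v ⊆ candidates T col w L' v ∧
    (∀ l ∈ L' v, ∀ l' ∈ candidates T col w L' v,
      bucketIndex ε l'.1 = bucketIndex ε l.1 →
      bucketIndex ε l'.2.1 = bucketIndex ε l.2.1 → l.2.2 ≤ l'.2.2) ∧
    (∀ l' ∈ candidates T col w L' v,
      ∃ l ∈ L' v, bucketIndex ε l.1 = bucketIndex ε l'.1 ∧
        bucketIndex ε l.2.1 = bucketIndex ε l'.2.1 ∧ l.2.2 ≤ l'.2.2)

/-!
Induction on the height. If every exact label of a child is dominated, up to a factor `a`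
in the two counts and at no extra cost, by a bucketed label of that child, then replacing
each chosen child label by its dominating one turns an exact candidate at `v` into a
bucketed candidate at `v` with the same guarantee. Keeping one cheapest candidate per pair
of buckets loses one more factor `1 + ε`, since two positive integers in the same bucket
differ by at most that factor. A child has smaller height, so the factors accumulate to
`(1 + ε) ^ (h_v + 1)`.
-/

namespace FMLTree

variable {V : Type*} (T : FMLTree V)

lemma bddAbove_heightSet (v : V) [Finite V] :
    BddAbove {k : ℕ | ∃ x, T.IsDesc v x ∧ T.depth x = T.depth v + k} := by
  refine ⟨⨆ x, T.depth x, ?_⟩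
  rintro k ⟨x, -, hx⟩
  have : T.depth x ≤ ⨆ x, T.depth x := le_ciSup (Set.finite_range T.depth).bddAbove x
  omega

lemma exists_isDesc_depth_eq_heightOf [Finite V] (v : V) :
    ∃ x, T.IsDesc v x ∧ T.depth x = T.depth v + T.heightOf v :=
  Nat.sSup_mem ⟨0, by exact ⟨v, ⟨0, rfl⟩, rfl⟩⟩ (T.bddAbove_heightSet v)

lemma le_heightOf [Finite V] {v x : V} {k : ℕ} (hx : T.IsDesc v x)
    (hk : T.depth x = T.depth v + k) : k ≤ T.heightOf v :=
  le_csSup (T.bddAbove_heightSet v) ⟨x, hx, hk⟩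

lemma heightOf_lt_heightOf_of_mem_children [Fintype V] [DecidableEq V] {u v : V}
    (hu : u ∈ T.children v) : T.heightOf u < T.heightOf v := by
  obtain ⟨hne, rfl⟩ : u ≠ T.root ∧ T.parent u = v := by simpa [children] using hu
  obtain ⟨x, ⟨k, hk⟩, hdx⟩ := T.exists_isDesc_depth_eq_heightOf u
  have hdu := T.depth_parent u hne
  exact T.le_heightOf ⟨k + 1, by rw [Function.iterate_succ_apply', hk]⟩ (by omega)

end FMLTree

section Bucket

variable {ε : ℝ} {x y : ℕ}

lemma bucketIndex_of_ne_zero (hx : x ≠ 0) :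
    bucketIndex ε x = sInf {i : ℕ | 1 ≤ i ∧ (x : ℝ) ≤ (1 + ε) ^ i} :=
  if_neg hx

lemma one_le_bucketIndex_and_le_pow (hε : 0 < ε) (hx : x ≠ 0) :
    1 ≤ bucketIndex ε x ∧ (x : ℝ) ≤ (1 + ε) ^ bucketIndex ε x := by
  rw [bucketIndex_of_ne_zero hx]
  refine Nat.sInf_mem (s := {i : ℕ | 1 ≤ i ∧ (x : ℝ) ≤ (1 + ε) ^ i}) ?_
  obtain ⟨n, hn⟩ := pow_unbounded_of_one_lt (x : ℝ) (by linarith : (1 : ℝ) < 1 + ε)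
  exact ⟨n + 1, by omega, hn.le.trans (pow_le_pow_right₀ (by linarith) n.le_succ)⟩

lemma pow_bucketIndex_sub_one_le (hx : x ≠ 0) : (1 + ε) ^ (bucketIndex ε x - 1) ≤ (x : ℝ) := by
  rcases Nat.lt_or_ge (bucketIndex ε x - 1) 1 with h | h
  · rw [Nat.lt_one_iff.mp h, pow_zero]
    exact_mod_cast Nat.one_le_iff_ne_zero.mpr hx
  · have hnot := Nat.notMem_of_lt_sInf (m := bucketIndex ε x - 1)
      (s := {i : ℕ | 1 ≤ i ∧ (x : ℝ) ≤ (1 + ε) ^ i})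
      (by rw [← bucketIndex_of_ne_zero hx]; omega)
    simp only [Set.mem_ofPred_eq, not_and, not_le] at hnot
    exact (hnot h).le

lemma le_one_add_mul_of_bucketIndex_eq (hε : 0 < ε)
    (h : bucketIndex ε y = bucketIndex ε x) : (x : ℝ) ≤ (1 + ε) * y := by
  rcases eq_or_ne x 0 with rfl | hx
  · push_cast; positivity
  obtain ⟨hi, hxle⟩ := one_le_bucketIndex_and_le_pow hε hx
  have hy : y ≠ 0 := by
    rintro rfl
    rw [bucketIndex, if_pos rfl] at h
    omega
  calc (x : ℝ) ≤ (1 + ε) ^ bucketIndex ε x := hxle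
    _ = (1 + ε) * (1 + ε) ^ (bucketIndex ε y - 1) := by
        rw [← pow_succ', h, Nat.sub_add_cancel hi]
    _ ≤ (1 + ε) * y := mul_le_mul_of_nonneg_left (pow_bucketIndex_sub_one_le hy) (by linarith)

end Bucket

lemma cast_sum_add_le_mul {ι : Type*} {s : Finset ι} {f g : ι → ℕ} {a : ℝ} (c : ℕ)
    (ha : 1 ≤ a) (hfg : ∀ u ∈ s, (f u : ℝ) ≤ a * g u) :
    ((∑ u ∈ s, f u + c : ℕ) : ℝ) ≤ a * ((∑ u ∈ s, g u + c : ℕ) : ℝ) := by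
  push_cast
  rw [mul_add, Finset.mul_sum]
  exact add_le_add (Finset.sum_le_sum hfg) (le_mul_of_one_le_left (by positivity) ha)

def DPLabel.Dominates (a : ℝ) (l' l : DPLabel) : Prop :=
  l'.2.2 ≤ l.2.2 ∧ (l.1 : ℝ) ≤ a * l'.1 ∧ (l.2.1 : ℝ) ≤ a * l'.2.1

namespace DPLabel.Dominates

variable {a b : ℝ} {l l' l'' : DPLabel}

lemma mono (h : Dominates a l' l) (hab : a ≤ b) : Dominates b l' l :=
  ⟨h.1, h.2.1.trans (by gcongr), h.2.2.trans (by gcongr)⟩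

lemma trans (h₁ : Dominates a l'' l') (h₂ : Dominates b l' l) (hb : 0 ≤ b) :
    Dominates (b * a) l'' l := by
  refine ⟨h₁.1.trans h₂.1, h₂.2.1.trans ?_, h₂.2.2.trans ?_⟩
  · rw [mul_assoc]; gcongr; exact h₁.2.1
  · rw [mul_assoc]; gcongr; exact h₁.2.2

end DPLabel.Dominates

section Candidates

open DPLabel

variable {V : Type*} [Fintype V] [DecidableEq V] (T : FMLTree V) (col : V → Option Bool)
  (w : V → ℝ)

lemma dominates_getD_map {a : ℝ} (wu : ℝ) {o : Option DPLabel}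
    {g : DPLabel → DPLabel} (hg : ∀ m ∈ o, Dominates a (g m) m) :
    ((o.map g).map fun m => m.2.2 + wu).getD 0 ≤ (o.map fun m => m.2.2 + wu).getD 0 ∧
    (((o.map Prod.fst).getD 0 : ℕ) : ℝ) ≤ a * (((o.map g).map Prod.fst).getD 0 : ℕ) ∧
    (((o.map fun m => m.2.1).getD 0 : ℕ) : ℝ) ≤
      a * (((o.map g).map fun m => m.2.1).getD 0 : ℕ) := by
  cases o with
  | none => simp
  | some m =>
    obtain ⟨hc, hb, hr⟩ := hg m rfl
    exact ⟨by simpa using hc, hb, hr⟩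

lemma exists_dominates_candidate {L L' : V → Set DPLabel} {a : ℝ} (ha : 1 ≤ a) (v : V)
    (hchild : ∀ u ∈ T.children v, ∀ m ∈ L u, ∃ m' ∈ L' u, Dominates a m' m) :
    ∀ l ∈ candidates T col w L v, ∃ l' ∈ candidates T col w L' v, Dominates a l' l := by
  rintro l ⟨choice, hnone, hmem, hb, hr, hc⟩
  choose! f hfL hfdom using hchild
  have hchosen : ∀ u m, choice u = some m → u ∈ T.children v ∧ m ∈ L u := fun u m hu =>
    ⟨by_contra fun h => by simp [hnone u h] at hu, hmem u m hu⟩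
  have key : ∀ u ∈ T.children v, _ := fun u _ =>
    dominates_getD_map (w u) (o := choice u) (g := f u)
      fun m hm => hfdom u (hchosen u m hm).1 m (hchosen u m hm).2
  let choice' u := (choice u).map (f u)
  refine ⟨(∑ u ∈ T.children v, ((choice' u).map Prod.fst).getD 0
        + (if col v = some true then 1 else 0),
      ∑ u ∈ T.children v, ((choice' u).map fun m => m.2.1).getD 0
        + (if col v = some false then 1 else 0),
      ∑ u ∈ T.children v, ((choice' u).map fun m => m.2.2 + w u).getD 0),
    ⟨choice', fun u hu => by simp [choice', hnone u hu], ?_, rfl, rfl, rfl⟩, ?_, ?_, ?_⟩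
  · intro u m' hm'
    obtain ⟨m, hm, rfl⟩ := Option.map_eq_some_iff.mp hm'
    exact hfL u (hchosen u m hm).1 m (hchosen u m hm).2
  · rw [hc]
    exact Finset.sum_le_sum fun u hu => (key u hu).1
  · rw [hb]
    exact cast_sum_add_le_mul _ ha fun u hu => (key u hu).2.1
  · rw [hr]
    exact cast_sum_add_le_mul _ ha fun u hu => (key u hu).2.2

lemma IsBucketDP.exists_dominates {ε : ℝ} (hε : 0 < ε) {L' : V → Set DPLabel}
    (hL' : IsBucketDP ε T col w L') (v : V) :
    ∀ l ∈ candidates T col w L' v, ∃ l' ∈ L' v, Dominates (1 + ε) l' l := by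
  intro l hl
  obtain ⟨l', hl', hb, hr, hc⟩ := (hL' v).2.2 l hl
  exact ⟨l', hl', hc, le_one_add_mul_of_bucketIndex_eq hε hb,
    le_one_add_mul_of_bucketIndex_eq hε hr⟩

lemma exists_dominates_of_isExactDP_of_isBucketDP {ε : ℝ} (hε : 0 < ε)
    {L L' : V → Set DPLabel} (hL : IsExactDP T col w L) (hL' : IsBucketDP ε T col w L')
    (v : V) : ∀ l ∈ L v, ∃ l' ∈ L' v, Dominates ((1 + ε) ^ (T.heightOf v + 1)) l' l := by
  induction hn : T.heightOf v using Nat.strong_induction_on generalizing v with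
  | _ n ih =>
  have hchild : ∀ u ∈ T.children v, ∀ m ∈ L u, ∃ m' ∈ L' u,
      Dominates ((1 + ε) ^ n) m' m := by
    intro u hu m hm
    have hlt := hn ▸ T.heightOf_lt_heightOf_of_mem_children hu
    obtain ⟨m', hm', hdom⟩ := ih _ hlt u rfl m hm
    exact ⟨m', hm', hdom.mono (pow_le_pow_right₀ (by linarith) hlt)⟩
  intro l hl
  obtain ⟨l', hl', hdom'⟩ := exists_dominates_candidate T col w
    (one_le_pow₀ (by linarith)) v hchild l ((hL v).1 hl)
  obtain ⟨l'', hl'', hdom''⟩ := IsBucketDP.exists_dominates T col w hε hL' v l' hl'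
  exact ⟨l'', hl'', pow_succ (1 + ε) n ▸ hdom''.trans hdom' (by positivity)⟩

end Candidates

theorem bucketDP_per_node_guarantee_general {V : Type*} [Fintype V] [DecidableEq V]
    (ε : ℝ) (hε : 0 < ε) (T : FMLTree V) (col : V → Option Bool) (w : V → ℝ)
    (L L' : V → Set DPLabel) (hL : IsExactDP T col w L)
    (hL' : IsBucketDP ε T col w L') (v : V) :
    ∀ l ∈ L v, ∃ l' ∈ L' v,
      l'.2.2 ≤ l.2.2 ∧
      (l.1 : ℝ) / (1 + ε) ^ (T.heightOf v + 1) ≤ (l'.1 : ℝ) ∧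
      (l.2.1 : ℝ) / (1 + ε) ^ (T.heightOf v + 1) ≤ (l'.2.1 : ℝ) := by
  intro l hl
  obtain ⟨l', hl', hc, hb, hr⟩ :=
    exists_dominates_of_isExactDP_of_isBucketDP T col w hε hL hL' v l hl
  have hpos : (0 : ℝ) < (1 + ε) ^ (T.heightOf v + 1) := by positivity
  exact ⟨l', hl', hc, (div_le_iff₀' hpos).2 hb, (div_le_iff₀' hpos).2 hr⟩

/-- fix `ε > 0`.  For every node `v` of `T` at height `h_v` and every exact
label `(b, r, c) ∈ L v`, the bucketed label set `L' v` contains a label `(b', r', c')`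
with `c' ≤ c`, `b' ≥ b / (1+ε)^(h_v+1)` and `r' ≥ r / (1+ε)^(h_v+1)`. -/
theorem bucketDP_per_node_guarantee {V : Type*} [Fintype V] [DecidableEq V]
    (ε : ℝ) (hε : 0 < ε) (T : FMLTree V) (col : V → Option Bool) (w : V → ℝ)
    (hw : ∀ u, u ≠ T.root → 1 ≤ w u)
    (L L' : V → Set DPLabel) (hL : IsExactDP T col w L)
    (hL' : IsBucketDP ε T col w L') (v : V) :
    ∀ l ∈ L v, ∃ l' ∈ L' v,
      l'.2.2 ≤ l.2.2 ∧
      (l.1 : ℝ) / (1 + ε) ^ (T.heightOf v + 1) ≤ (l'.1 : ℝ) ∧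
      (l.2.1 : ℝ) / (1 + ε) ^ (T.heightOf v + 1) ≤ (l'.2.1 : ℝ) :=
  bucketDP_per_node_guarantee_general ε hε T col w L L' hL hL' v
end

section
/- Let (V, 𝓔₁) and (V', 𝓔₂) be temporal graphs with V ⊆ V', and let K ∈ ℕ with K ≥ 1. Suppose that for every temporal edge ({u,v}, τ) ∈ 𝓔₁ there exist in (V', 𝓔₂) both a temporal path from u to v and a temporal path from v to u, all of whose timestamps lie in the interval ((τ−1)·K, τ·K]. Then for all u, x ∈ V, if x is temporally reachable from u in (V, 𝓔₁), then x is temporally reachable from u in (V', 𝓔₂). -/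
/-!
Timestamp `τ` of the first graph is simulated inside the window `((τ - 1) K, τ K]` of the
second. These windows are ordered like the timestamps they come from, so along a temporal path
of the first graph the simulating paths of its edges concatenate to a temporal path of the
second. The induction runs over temporal paths all of whose timestamps are at least `t`; such
a path is simulated by one whose timestamps exceed `(t - 1) K`.
-/

section

variable {V : Type*}

/-- `w` is reachable from `u` by a temporal path all of whose timestamps are at least `t`. -/
inductive TemporallyReachableSince (E : Set (Sym2 V × ℕ)) : ℕ → V → V → Prop
  | refl (t : ℕ) (u : V) : TemporallyReachableSince E t u u
  | cons {t τ : ℕ} {u v w : V} : (s(u, v), τ) ∈ E → t ≤ τ →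
      TemporallyReachableSince E (τ + 1) v w → TemporallyReachableSince E t u w

variable {E : Set (Sym2 V × ℕ)}

theorem TemporallyReachableSince.mono {s t : ℕ} {u w : V} (hst : s ≤ t) :
    TemporallyReachableSince E t u w → TemporallyReachableSince E s u w
  | refl _ _ => refl _ _
  | cons hedge hτ h => cons hedge (hst.trans hτ) h

theorem IsTemporalPath.trans_temporallyReachableSince {p : ℕ} {a b w : V}
    {vtx : Fin (p + 1) → V} {ts : Fin p → ℕ} {s e : ℕ} (hpath : IsTemporalPath E a b p vtx ts)
    (hs : ∀ i, s ≤ ts i) (he : ∀ i, ts i < e) (hse : s ≤ e)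
    (h : TemporallyReachableSince E e b w) : TemporallyReachableSince E s a w := by
  induction p generalizing a s with
  | zero =>
    obtain ⟨rfl, rfl, -, -⟩ := hpath
    exact h.mono hse
  | succ p ih =>
    obtain ⟨rfl, rfl, hmono, hedges⟩ := hpath
    have htail : IsTemporalPath E (vtx (Fin.succ 0)) (vtx (Fin.last (p + 1))) p
        (fun i => vtx i.succ) (fun i => ts i.succ) :=
      ⟨rfl, by rw [← Fin.succ_last], hmono.comp (Fin.strictMono_succ),
        fun i => by simpa only [Fin.succ_castSucc] using hedges i.succ⟩
    exact .cons (hedges 0) (hs 0) <|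
      ih htail (fun i => hmono (Fin.succ_pos i)) (fun i => he i.succ) (he 0)

theorem TemporallyReachableSince.exists_isTemporalPath {t : ℕ} {u w : V}
    (h : TemporallyReachableSince E t u w) :
    ∃ (p : ℕ) (vtx : Fin (p + 1) → V) (ts : Fin p → ℕ),
      IsTemporalPath E u w p vtx ts ∧ ∀ i, t ≤ ts i := by
  induction h with
  | refl t u =>
    exact ⟨0, fun _ => u, Fin.elim0, ⟨rfl, rfl, fun i => i.elim0, fun i => i.elim0⟩,
      fun i => i.elim0⟩
  | @cons t τ u v w hedge hτ _ ih =>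
    obtain ⟨p, vtx, ts, ⟨rfl, hlast, hmono, hedges⟩, hge⟩ := ih
    refine ⟨p + 1, Fin.cons u vtx, Fin.cons τ ts,
      ⟨rfl, by rwa [← Fin.succ_last, Fin.cons_succ],
        Fin.strictMono_cons.mpr ⟨fun i => hge i, hmono⟩, fun i => ?_⟩,
      fun i => Fin.cases hτ (fun i => by simpa using hτ.trans (Nat.le_of_succ_le (hge i))) i⟩
    cases i using Fin.cases with
    | zero => simpa using hedge
    | succ i => simpa only [← Fin.succ_castSucc, Fin.cons_succ] using hedges i

theorem temporallyReachable_iff_temporallyReachableSince_zero {u w : V} :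
    TemporallyReachable E u w ↔ TemporallyReachableSince E 0 u w := by
  constructor
  · rintro (rfl | ⟨p, vtx, ts, hpath⟩)
    · exact .refl 0 u
    · exact hpath.trans_temporallyReachableSince (e := Finset.univ.sup ts + 1)
        (fun _ => Nat.zero_le _)
        (fun i => Nat.lt_succ_of_le (Finset.le_sup (Finset.mem_univ i))) (Nat.zero_le _)
        (.refl _ w)
  · intro h
    obtain ⟨p, vtx, ts, hpath, -⟩ := h.exists_isTemporalPath
    exact .inr ⟨p, vtx, ts, hpath⟩

theorem TemporallyReachableSince.simulate {E₁ E₂ : Set (Sym2 V × ℕ)} {K t : ℕ} {u w : V}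
    (hsim : ∀ a b : V, ∀ τ : ℕ, (s(a, b), τ) ∈ E₁ →
      ∃ (p : ℕ) (vtx : Fin (p + 1) → V) (ts : Fin p → ℕ),
        IsTemporalPath E₂ a b p vtx ts ∧ ∀ i : Fin p, (τ - 1) * K < ts i ∧ ts i ≤ τ * K)
    (h : TemporallyReachableSince E₁ t u w) :
    TemporallyReachableSince E₂ ((t - 1) * K + 1) u w := by
  induction h with
  | refl => exact .refl _ _
  | @cons t τ a b c hedge hτ _ ih =>
    obtain ⟨p, vtx, ts, hpath, hwindow⟩ := hsim a b τ hedge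
    have hle : (t - 1) * K ≤ (τ - 1) * K := Nat.mul_le_mul_right K (Nat.sub_le_sub_right hτ 1)
    have hle' : (τ - 1) * K ≤ τ * K := Nat.mul_le_mul_right K (Nat.sub_le _ _)
    refine hpath.trans_temporallyReachableSince (e := τ * K + 1)
      (fun i => by have := (hwindow i).1; omega) (fun i => by have := (hwindow i).2; omega)
      (by omega) ?_
    simpa only [Nat.add_sub_cancel] using ih

end

theorem simulation_preserves_reachability_general {V' : Type*} (Vs : Set V')
    (E₁ E₂ : Set (Sym2 V' × ℕ)) (K : ℕ)
    (hsim : ∀ a b : V', ∀ τ : ℕ, (s(a, b), τ) ∈ E₁ →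
      (∃ (p : ℕ) (vtx : Fin (p + 1) → V') (ts : Fin p → ℕ),
        IsTemporalPath E₂ a b p vtx ts ∧ ∀ i : Fin p, (τ - 1) * K < ts i ∧ ts i ≤ τ * K) ∧
      (∃ (p : ℕ) (vtx : Fin (p + 1) → V') (ts : Fin p → ℕ),
        IsTemporalPath E₂ b a p vtx ts ∧ ∀ i : Fin p, (τ - 1) * K < ts i ∧ ts i ≤ τ * K)) :
    ∀ u x : V', u ∈ Vs → x ∈ Vs →
      TemporallyReachable E₁ u x → TemporallyReachable E₂ u x := by
  intro u x _ _ h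
  have h₁ := temporallyReachable_iff_temporallyReachableSince_zero.mp h
  exact temporallyReachable_iff_temporallyReachableSince_zero.mpr <|
    (h₁.simulate fun a b τ hedge => (hsim a b τ hedge).1).mono (Nat.zero_le _)

/-- let `(V, 𝓔₁)` and `(V', 𝓔₂)` be temporal graphs with `V ⊆ V'` and let
`K ≥ 1`.  If for every temporal edge `({u,v}, τ) ∈ 𝓔₁` there exist in `(V', 𝓔₂)` both a
temporal path from `u` to `v` and one from `v` to `u`, all of whose timestamps lie in
`((τ-1)·K, τ·K]`, then temporal reachability in `(V, 𝓔₁)` implies temporal reachability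
in `(V', 𝓔₂)`. -/
theorem simulation_preserves_reachability {V' : Type*} [Fintype V'] (Vs : Set V')
    (E₁ E₂ : Set (Sym2 V' × ℕ)) (K : ℕ) (hK : 1 ≤ K)
    (hVs : ∀ e ∈ E₁, ∀ x ∈ e.1, x ∈ Vs)
    (hloopfree : ∀ e ∈ E₁, ¬ e.1.IsDiag)
    (hpos : ∀ e ∈ E₁, 1 ≤ e.2)
    (hsim : ∀ a b : V', ∀ τ : ℕ, (s(a, b), τ) ∈ E₁ →
      (∃ (p : ℕ) (vtx : Fin (p + 1) → V') (ts : Fin p → ℕ),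
        IsTemporalPath E₂ a b p vtx ts ∧ ∀ i : Fin p, (τ - 1) * K < ts i ∧ ts i ≤ τ * K) ∧
      (∃ (p : ℕ) (vtx : Fin (p + 1) → V') (ts : Fin p → ℕ),
        IsTemporalPath E₂ b a p vtx ts ∧ ∀ i : Fin p, (τ - 1) * K < ts i ∧ ts i ≤ τ * K)) :
    ∀ u x : V', u ∈ Vs → x ∈ Vs →
      TemporallyReachable E₁ u x → TemporallyReachable E₂ u x :=
  simulation_preserves_reachability_general Vs E₁ E₂ K hsim
end

section
/- Consider the set-cover gadget graph for an instance (U, 𝒮) with |U| = m and parameter L ≥ 1. If 𝒮' ⊆ 𝒮 is a subfamily of size ℓ whose union is U, then there exists a temporal labeling λ of the gadget graph of cost |λ| ≤ m + (L+1)·ℓ under which the terminal r is temporally reachable from every element node t_j. Explicitly: for each S_i ∈ 𝒮', label the L+1 chain edges {s_i, w_{i,1}}, {w_{i,1}, w_{i,2}}, …, {w_{i,L}, r} with the timestamps 2, 3, …, L+2 in order from s_i towards r; and for each j ∈ [m], choose some S_{i(j)} ∈ 𝒮' containing u_j and label the edge {t_j, s_{i(j)}} with timestamp 1. -/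
/-- The nodes of the set-cover gadget graph: the terminal `r`, a set node `s i` for each
`i ∈ [n]`, an element node `t j` for each `j ∈ [m]`, and chain nodes `w i k` for each
`i ∈ [n]` and `k : Fin L` (the node `w i k` represents the paper's `w_{i,k+1}`). -/
inductive GV (n m L : ℕ) : Type
  | r : GV n m L
  | s (i : Fin n) : GV n m L
  | t (j : Fin m) : GV n m L
  | w (i : Fin n) (k : Fin L) : GV n m L
  deriving DecidableEq, Fintype

/-- The edge set of the set-cover gadget graph: `{t j, s i}` whenever `u_j ∈ S_i`, and
for each `i` the `L+1` chain edges `{s_i, w_{i,1}}, {w_{i,1}, w_{i,2}}, …,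
{w_{i,L-1}, w_{i,L}}, {w_{i,L}, r}`. -/
def gadgetEdges (n m L : ℕ) (S : Fin n → Finset (Fin m)) : Set (Sym2 (GV n m L)) :=
  {e | (∃ i j, j ∈ S i ∧ e = s(GV.t j, GV.s i)) ∨
       (∃ (i : Fin n) (k : Fin L), (k : ℕ) = 0 ∧ e = s(GV.s i, GV.w i k)) ∨
       (∃ (i : Fin n) (k k' : Fin L), (k' : ℕ) = (k : ℕ) + 1 ∧
          e = s(GV.w i k, GV.w i k')) ∨
       (∃ (i : Fin n) (k : Fin L), (k : ℕ) = L - 1 ∧ e = s(GV.w i k, GV.r))}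

/-- The temporal edges induced by a temporal labeling `lab` of a static graph with edge
set `E`. -/
def inducedTemporal {V : Type*} (E : Set (Sym2 V)) (lab : Sym2 V → Finset ℕ) :
    Set (Sym2 V × ℕ) :=
  {q | q.1 ∈ E ∧ q.2 ∈ lab q.1}

/-- The cost `|λ|` of a temporal labeling: the total number of assigned timestamps. -/
def labCost {n m L : ℕ} (lab : Sym2 (GV n m L) → Finset ℕ) : ℕ :=
  ∑ e : Sym2 (GV n m L), (lab e).card

def labelingOfPairs {V : Type*} [DecidableEq V] (T : Finset (Sym2 V × ℕ)) (e : Sym2 V) :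
    Finset ℕ :=
  (T.filter (·.1 = e)).image Prod.snd

theorem mem_labelingOfPairs {V : Type*} [DecidableEq V] {T : Finset (Sym2 V × ℕ)}
    {e : Sym2 V} {τ : ℕ} : τ ∈ labelingOfPairs T e ↔ (e, τ) ∈ T := by
  simp [labelingOfPairs]

theorem sum_card_labelingOfPairs {V : Type*} [Fintype V] [DecidableEq V]
    (T : Finset (Sym2 V × ℕ)) : ∑ e, (labelingOfPairs T e).card = T.card := by
  rw [Finset.card_eq_sum_card_fiberwise (f := Prod.fst) (t := Finset.univ)
    (fun _ _ => Finset.mem_univ _)]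
  refine Finset.sum_congr rfl fun e _ => Finset.card_image_of_injOn ?_
  rintro ⟨e₁, τ₁⟩ h₁ ⟨e₂, τ₂⟩ h₂ (rfl : τ₁ = τ₂)
  simp only [Finset.coe_filter, Set.mem_ofPred_eq] at h₁ h₂
  exact Prod.ext (h₁.2.trans h₂.2.symm) rfl

theorem TemporallyReachable.of_path {V : Type*} {E : Set (Sym2 V × ℕ)} (vtx : ℕ → V)
    {ts : ℕ → ℕ} (hts : StrictMono ts) (p : ℕ)
    (hedge : ∀ x < p, (s(vtx x, vtx (x + 1)), ts x) ∈ E) :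
    TemporallyReachable E (vtx 0) (vtx p) :=
  .inr ⟨p, fun x => vtx x, fun x => ts x, rfl, rfl, fun _ _ h => hts h,
    fun x => hedge x x.isLt⟩

namespace GV

variable {n m L : ℕ}

/-- `chain i a` is the `a`-th node of `s_i, w_{i,1}, …, w_{i,L}, r`, for `a ≤ L + 1`. -/
def chain (i : Fin n) : ℕ → GV n m L
  | 0 => s i
  | a + 1 => if h : a < L then w i ⟨a, h⟩ else r

theorem chain_succ_of_lt (i : Fin n) {a : ℕ} (h : a < L) :
    (chain i (a + 1) : GV n m L) = w i ⟨a, h⟩ :=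
  dif_pos h

theorem chain_succ_self (i : Fin n) : (chain i (L + 1) : GV n m L) = r :=
  dif_neg (lt_irrefl L)

theorem chain_label_iff (hL : 1 ≤ L) (i : Fin n) (e : Sym2 (GV n m L)) (τ : ℕ) :
    ((∃ k : Fin L, (k : ℕ) = 0 ∧ e = s(s i, w i k) ∧ τ = 2) ∨
      (∃ k k' : Fin L, (k' : ℕ) = (k : ℕ) + 1 ∧ e = s(w i k, w i k') ∧
        τ = (k : ℕ) + 3) ∨
      (∃ k : Fin L, (k : ℕ) = L - 1 ∧ e = s(w i k, r) ∧ τ = L + 2)) ↔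
    ∃ a : Fin (L + 1), e = s(chain i a, chain i (a + 1)) ∧ τ = a + 2 := by
  constructor
  · rintro (⟨⟨k, hkL⟩, hk, rfl, rfl⟩ | ⟨⟨k, hkL⟩, ⟨k', hk'L⟩, hk', rfl, rfl⟩ |
        ⟨⟨k, hkL⟩, hk, rfl, rfl⟩)
    · obtain rfl : k = 0 := hk
      refine ⟨0, ?_, rfl⟩
      rw [Fin.val_zero, zero_add, chain_succ_of_lt i hkL]
      rfl
    · obtain rfl : k' = k + 1 := hk'
      refine ⟨⟨k + 1, by omega⟩, ?_, rfl⟩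
      rw [chain_succ_of_lt i hkL, chain_succ_of_lt i hk'L]
    · obtain rfl : L = k + 1 := by simp only at hk; omega
      refine ⟨Fin.last (k + 1), ?_, rfl⟩
      rw [Fin.val_last, chain_succ_of_lt i hkL, chain_succ_self]
  · rintro ⟨⟨a, ha⟩, rfl, rfl⟩
    rcases a with _ | a
    · exact .inl ⟨⟨0, hL⟩, rfl, by rw [chain_succ_of_lt i hL]; rfl, rfl⟩
    rcases lt_or_eq_of_le (Nat.le_of_lt_succ ha) with ha | rfl
    · refine .inr (.inl ⟨⟨a, by omega⟩, ⟨a + 1, ha⟩, rfl, ?_, rfl⟩)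
      rw [chain_succ_of_lt i (by omega), chain_succ_of_lt i ha]
    · refine .inr (.inr ⟨⟨a, by omega⟩, rfl, ?_, rfl⟩)
      rw [chain_succ_of_lt i (by omega), chain_succ_self]

theorem chain_edge_mem_gadgetEdges (hL : 1 ≤ L) (S : Fin n → Finset (Fin m)) (i : Fin n)
    (a : Fin (L + 1)) : s(chain i a, chain i (a + 1)) ∈ gadgetEdges n m L S := by
  rcases (chain_label_iff hL i _ (a + 2)).2 ⟨a, rfl, rfl⟩ with
    ⟨k, hk, he, -⟩ | ⟨k, k', hk, he, -⟩ | ⟨k, hk, he, -⟩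
  · exact .inr (.inl ⟨i, k, hk, he⟩)
  · exact .inr (.inr (.inl ⟨i, k, k', hk, he⟩))
  · exact .inr (.inr (.inr ⟨i, k, hk, he⟩))

def coverPair (ch : Fin m → Fin n) :
    Fin m ⊕ (Fin n × Fin (L + 1)) → Sym2 (GV n m L) × ℕ
  | .inl j => (s(t j, s (ch j)), 1)
  | .inr (i, a) => (s(chain i a, chain i (a + 1)), a + 2)

def coverPairs (ch : Fin m → Fin n) (S' : Finset (Fin n)) : Finset (Sym2 (GV n m L) × ℕ) :=
  ((Finset.univ : Finset (Fin m)).disjSum (S' ×ˢ Finset.univ)).image (coverPair ch)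

theorem card_coverPairs_le (ch : Fin m → Fin n) (S' : Finset (Fin n)) :
    (coverPairs (L := L) ch S').card ≤ m + (L + 1) * S'.card := by
  refine Finset.card_image_le.trans_eq ?_
  rw [Finset.card_disjSum, Finset.card_product, Finset.card_univ, Finset.card_univ,
    Fintype.card_fin, Fintype.card_fin, mul_comm]

theorem mem_coverPairs (hL : 1 ≤ L) (ch : Fin m → Fin n) (S' : Finset (Fin n))
    (e : Sym2 (GV n m L)) (τ : ℕ) :
    (e, τ) ∈ coverPairs ch S' ↔
      ((τ = 1 ∧ ∃ j : Fin m, e = s(t j, s (ch j))) ∨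
       (∃ i ∈ S',
         (∃ k : Fin L, (k : ℕ) = 0 ∧ e = s(s i, w i k) ∧ τ = 2) ∨
         (∃ k k' : Fin L, (k' : ℕ) = (k : ℕ) + 1 ∧ e = s(w i k, w i k') ∧
            τ = (k : ℕ) + 3) ∨
         (∃ k : Fin L, (k : ℕ) = L - 1 ∧ e = s(w i k, r) ∧ τ = L + 2))) := by
  simp only [chain_label_iff hL]
  simp [coverPairs, coverPair, Prod.ext_iff, eq_comm, and_comm]

theorem fst_mem_gadgetEdges_of_mem_coverPairs (hL : 1 ≤ L) {S : Fin n → Finset (Fin m)}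
    {ch : Fin m → Fin n} (hch : ∀ j, j ∈ S (ch j)) {S' : Finset (Fin n)}
    {q : Sym2 (GV n m L) × ℕ} (hq : q ∈ coverPairs ch S') : q.1 ∈ gadgetEdges n m L S := by
  obtain ⟨j | ⟨i, a⟩, -, rfl⟩ := Finset.mem_image.1 hq
  · exact .inl ⟨ch j, j, hch j, rfl⟩
  · exact chain_edge_mem_gadgetEdges hL S i a

def coverPath (ch : Fin m → Fin n) (j : Fin m) : ℕ → GV n m L
  | 0 => t j
  | a + 1 => chain (ch j) a

theorem coverPath_edge_mem_coverPairs {ch : Fin m → Fin n} {S' : Finset (Fin n)} {j : Fin m}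
    (hj : ch j ∈ S') {x : ℕ} (hx : x < L + 2) :
    (s(coverPath ch j x, coverPath ch j (x + 1)), x + 1) ∈ coverPairs (L := L) ch S' := by
  refine Finset.mem_image.2 ?_
  rcases x with _ | a
  · exact ⟨.inl j, by simp, rfl⟩
  · exact ⟨.inr (ch j, ⟨a, by omega⟩), by simp [hj], rfl⟩

end GV

theorem setcover_gives_cheap_labeling_general (n m L : ℕ) (hL : 1 ≤ L)
    (S : Fin n → Finset (Fin m))
    (S' : Finset (Fin n)) (ℓ : ℕ) (hℓ : S'.card = ℓ)
    (ch : Fin m → Fin n) (hch : ∀ j, ch j ∈ S' ∧ j ∈ S (ch j)) :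
    ∃ lab : Sym2 (GV n m L) → Finset ℕ,
      (∀ (e : Sym2 (GV n m L)) (τ : ℕ), τ ∈ lab e ↔
        ((τ = 1 ∧ ∃ j : Fin m, e = s(GV.t j, GV.s (ch j))) ∨
         (∃ i ∈ S',
           (∃ k : Fin L, (k : ℕ) = 0 ∧ e = s(GV.s i, GV.w i k) ∧ τ = 2) ∨
           (∃ k k' : Fin L, (k' : ℕ) = (k : ℕ) + 1 ∧ e = s(GV.w i k, GV.w i k') ∧
              τ = (k : ℕ) + 3) ∨
           (∃ k : Fin L, (k : ℕ) = L - 1 ∧ e = s(GV.w i k, GV.r) ∧ τ = L + 2)))) ∧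
      labCost lab ≤ m + (L + 1) * ℓ ∧
      ∀ j : Fin m, TemporallyReachable (inducedTemporal (gadgetEdges n m L S) lab)
        (GV.t j) GV.r := by
  refine ⟨labelingOfPairs (GV.coverPairs ch S'), fun e τ => ?_, ?_, fun j => ?_⟩
  · rw [mem_labelingOfPairs, GV.mem_coverPairs hL]
  · rw [labCost, sum_card_labelingOfPairs, ← hℓ]
    exact GV.card_coverPairs_le ch S'
  · rw [← GV.chain_succ_self (ch j)]
    refine TemporallyReachable.of_path (GV.coverPath ch j) (add_left_strictMono (a := 1))
      (L + 2) fun x hx => ?_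
    have hmem := GV.coverPath_edge_mem_coverPairs (hch j).1 hx
    exact ⟨GV.fst_mem_gadgetEdges_of_mem_coverPairs hL (fun j => (hch j).2) hmem,
      mem_labelingOfPairs.2 hmem⟩

/-- if `𝒮' ⊆ 𝒮` is a subfamily of size `ℓ` covering `U`, then the explicit
labeling (chain edges of each chosen set labeled `2, 3, …, L+2` in order from `s_i`
towards `r`, and for each element `j` the edge to a chosen covering set labeled `1`) has
cost at most `m + (L+1)·ℓ` and makes `r` temporally reachable from every element node. -/
theorem setcover_gives_cheap_labeling (n m L : ℕ) (hL : 1 ≤ L)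
    (S : Fin n → Finset (Fin m)) (hcover : ∀ j, ∃ i, j ∈ S i)
    (S' : Finset (Fin n)) (ℓ : ℕ) (hℓ : S'.card = ℓ)
    (hS' : ∀ j, ∃ i ∈ S', j ∈ S i)
    (ch : Fin m → Fin n) (hch : ∀ j, ch j ∈ S' ∧ j ∈ S (ch j)) :
    ∃ lab : Sym2 (GV n m L) → Finset ℕ,
      (∀ (e : Sym2 (GV n m L)) (τ : ℕ), τ ∈ lab e ↔
        ((τ = 1 ∧ ∃ j : Fin m, e = s(GV.t j, GV.s (ch j))) ∨
         (∃ i ∈ S',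
           (∃ k : Fin L, (k : ℕ) = 0 ∧ e = s(GV.s i, GV.w i k) ∧ τ = 2) ∨
           (∃ k k' : Fin L, (k' : ℕ) = (k : ℕ) + 1 ∧ e = s(GV.w i k, GV.w i k') ∧
              τ = (k : ℕ) + 3) ∨
           (∃ k : Fin L, (k : ℕ) = L - 1 ∧ e = s(GV.w i k, GV.r) ∧ τ = L + 2)))) ∧
      labCost lab ≤ m + (L + 1) * ℓ ∧
      ∀ j : Fin m, TemporallyReachable (inducedTemporal (gadgetEdges n m L S) lab)
        (GV.t j) GV.r :=
  setcover_gives_cheap_labeling_general n m L hL S S' ℓ hℓ ch hch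
end

section
/- Consider the set-cover gadget graph for an instance (U, 𝒮) with |U| = m and parameter L ≥ 1, and let λ be any temporal labeling of the gadget graph. If the terminal r is temporally reachable from the element node t_j in the induced temporal graph, then there exists an index i ∈ [n] such that each of the L+1 chain edges {s_i, w_{i,1}}, {w_{i,1}, w_{i,2}}, …, {w_{i,L}, r} carries at least one label under λ, and moreover there exist timestamps τ₀ < τ₁ < ⋯ < τ_L with τ₀ ∈ λ({s_i, w_{i,1}}), τ_k ∈ λ({w_{i,k}, w_{i,k+1}}) for 1 ≤ k ≤ L−1, and τ_L ∈ λ({w_{i,L}, r}). -/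
/-- `ArrivesBefore A k T`: the first `k` edges of a path whose `l`-th edge carries the
labels `A l` can be traversed in order by a temporal walk that arrives before time `T`. -/
def ArrivesBefore (A : ℕ → Finset ℕ) : ℕ → ℕ → Prop
  | 0, _ => True
  | k + 1, T => ∃ τ ∈ A k, τ < T ∧ ArrivesBefore A k τ

namespace ArrivesBefore

variable {A : ℕ → Finset ℕ}

theorem mono {k T T' : ℕ} (h : ArrivesBefore A k T) (hT : T ≤ T') : ArrivesBefore A k T' := by
  cases k with
  | zero => trivial
  | succ k =>
    obtain ⟨τ, hτA, hτT, hprev⟩ := h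
    exact ⟨τ, hτA, hτT.trans_le hT, hprev⟩

theorem succ {k T τ : ℕ} (h : ArrivesBefore A k T) (hτA : τ ∈ A k) (hTτ : T ≤ τ) :
    ArrivesBefore A (k + 1) (τ + 1) :=
  ⟨τ, hτA, τ.lt_succ_self, h.mono hTτ⟩

theorem of_succ {k T : ℕ} (h : ArrivesBefore A (k + 1) T) : ArrivesBefore A k T := by
  obtain ⟨τ, -, hτT, hprev⟩ := h
  exact hprev.mono hτT.le

theorem exists_strictMono {k T : ℕ} (h : ArrivesBefore A k T) :
    ∃ τ : Fin k → ℕ, StrictMono τ ∧ (∀ l : Fin k, τ l ∈ A l) ∧ ∀ l, τ l < T := by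
  induction k generalizing T with
  | zero => exact ⟨Fin.elim0, fun a => a.elim0, fun l => l.elim0, fun l => l.elim0⟩
  | succ k ih =>
    obtain ⟨τlast, hA, hT, hprev⟩ := h
    obtain ⟨τ, hmono, hτA, hτlt⟩ := ih hprev
    refine ⟨Fin.snoc (α := fun _ => ℕ) τ τlast, fun a b hab => ?_, ?_, ?_⟩
    · obtain ⟨a, rfl⟩ := Fin.exists_castSucc_eq.2 (Fin.ne_last_of_lt hab)
      induction b using Fin.lastCases with
      | last => simpa only [Fin.snoc_castSucc, Fin.snoc_last] using hτlt a
      | cast b =>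
        simpa only [Fin.snoc_castSucc] using hmono (Fin.castSucc_lt_castSucc_iff.1 hab)
    · refine Fin.lastCases ?_ (fun l => ?_)
      · simpa only [Fin.snoc_last, Fin.val_last] using hA
      · simpa only [Fin.snoc_castSucc, Fin.val_castSucc] using hτA l
    · refine Fin.lastCases ?_ (fun l => ?_)
      · simpa only [Fin.snoc_last] using hT
      · simpa only [Fin.snoc_castSucc] using (hτlt l).trans hT

end ArrivesBefore

/-- `P x T` reads: the walk is at `x` and all its later timestamps are at least `T`. -/
theorem TemporallyReachable.exists_of_invariant {V : Type*} {E : Set (Sym2 V × ℕ)}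
    {u w : V} {P : V → ℕ → Prop} (hreach : TemporallyReachable E u w) (hu : P u 0)
    (hstep : ∀ x y τ T, (s(x, y), τ) ∈ E → T ≤ τ → P x T → P y (τ + 1)) :
    ∃ T, P w T := by
  obtain rfl | ⟨p, vtx, ts, rfl, rfl, hts, hE⟩ := hreach
  · exact ⟨0, hu⟩
  have key : ∀ q : Fin (p + 1), ∃ T, P (vtx q) T ∧ ∀ l : Fin p, q ≤ l.castSucc → T ≤ ts l := by
    refine Fin.induction ⟨0, hu, fun _ _ => Nat.zero_le _⟩ fun q ⟨T, hP, hT⟩ => ?_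
    refine ⟨ts q + 1, hstep _ _ _ _ (hE q) (hT q le_rfl) hP, fun l hl => hts ?_⟩
    exact Fin.castSucc_lt_castSucc_iff.1 (Fin.castSucc_lt_succ.trans_le hl)
  exact (key (Fin.last p)).imp fun _ h => h.1

section Gadget

variable {n m L : ℕ}

/-- The `l`-th node of chain `i`: `s i`, then `w i 0, …, w i (L - 1)`, then `r`. -/
def chainVertex (i : Fin n) : ℕ → GV n m L
  | 0 => GV.s i
  | k + 1 => if h : k < L then GV.w i ⟨k, h⟩ else GV.r

theorem chainVertex_succ_val (i : Fin n) (k : Fin L) :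
    (chainVertex i (k + 1) : GV n m L) = GV.w i k :=
  dif_pos k.isLt

theorem chainVertex_succ_length (i : Fin n) : (chainVertex i (L + 1) : GV n m L) = GV.r :=
  dif_neg (lt_irrefl L)

def chainLabels (lab : Sym2 (GV n m L) → Finset ℕ) (i : Fin n) (l : ℕ) : Finset ℕ :=
  lab s(chainVertex i l, chainVertex i (l + 1))

theorem chainLabels_zero (lab : Sym2 (GV n m L) → Finset ℕ) (i : Fin n) (hL : 0 < L) :
    chainLabels lab i 0 = lab s(GV.s i, GV.w i ⟨0, hL⟩) :=
  congrArg (fun x => lab s(GV.s i, x)) (chainVertex_succ_val i ⟨0, hL⟩)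

theorem chainLabels_of_pos (lab : Sym2 (GV n m L) → Finset ℕ) (i : Fin n) {k : ℕ}
    (h0 : 0 < k) (hk : k < L) :
    chainLabels lab i k = lab s(GV.w i ⟨k - 1, by omega⟩, GV.w i ⟨k, hk⟩) := by
  obtain ⟨k, rfl⟩ := Nat.exists_eq_add_one_of_ne_zero h0.ne'
  exact congrArg₂ (fun x y => lab s(x, y)) (chainVertex_succ_val i ⟨k, by omega⟩)
    (chainVertex_succ_val i ⟨k + 1, hk⟩)

theorem chainLabels_length (lab : Sym2 (GV n m L) → Finset ℕ) (i : Fin n) (hL : 0 < L) :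
    chainLabels lab i L = lab s(GV.w i ⟨L - 1, by omega⟩, GV.r) := by
  obtain ⟨k, rfl⟩ := Nat.exists_eq_add_one_of_ne_zero hL.ne'
  exact congrArg₂ (fun x y => lab s(x, y)) (chainVertex_succ_val i ⟨k, by omega⟩)
    (chainVertex_succ_length i)

/-- The record a temporal walk carries on reaching a node before time `T`; reaching `r`
is only possible together with `HasTraversedChain`. -/
def Progress (lab : Sym2 (GV n m L) → Finset ℕ) : GV n m L → ℕ → Prop
  | .r, _ => False
  | .s _, _ => True
  | .t _, _ => True
  | .w i k, T => ArrivesBefore (chainLabels lab i) (k + 1) T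

def HasTraversedChain (lab : Sym2 (GV n m L) → Finset ℕ) : Prop :=
  ∃ i T, ArrivesBefore (chainLabels lab i) (L + 1) T

theorem progress_step {S : Fin n → Finset (Fin m)} {lab : Sym2 (GV n m L) → Finset ℕ}
    {x y : GV n m L} {τ T : ℕ} (he : (s(x, y), τ) ∈ inducedTemporal (gadgetEdges n m L S) lab)
    (hT : T ≤ τ) (hx : Progress lab x T) :
    HasTraversedChain lab ∨ Progress lab y (τ + 1) := by
  obtain ⟨hE, hτ⟩ := he
  rcases hE with ⟨i, j, -, he⟩ | ⟨i, k, hk, he⟩ | ⟨i, k, k', hk, he⟩ | ⟨i, k, hk, he⟩ <;>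
    rcases Sym2.eq_iff.1 he with ⟨rfl, rfl⟩ | ⟨rfl, rfl⟩
  · exact Or.inr trivial
  · exact Or.inr trivial
  · refine Or.inr (show ArrivesBefore _ (k + 1) _ from ?_)
    have hmem : τ ∈ chainLabels lab i k := by rwa [chainLabels, chainVertex_succ_val, hk]
    rw [hk] at hmem ⊢
    exact ArrivesBefore.succ trivial hmem (Nat.zero_le τ)
  · exact Or.inr trivial
  · refine Or.inr (show ArrivesBefore _ (k' + 1) _ from ?_)
    have hmem : τ ∈ chainLabels lab i (k + 1) := by
      rwa [chainLabels, chainVertex_succ_val, ← hk, chainVertex_succ_val]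
    rw [hk]
    exact hx.succ hmem hT
  · refine Or.inr (show ArrivesBefore _ (k + 1) _ from ?_)
    exact (hk ▸ hx : ArrivesBefore _ (k + 1 + 1) T).of_succ.mono (hT.trans τ.le_succ)
  · refine Or.inl ⟨i, τ + 1, ?_⟩
    have hlast : (k : ℕ) + 1 = L := by omega
    have hmem : τ ∈ chainLabels lab i (k + 1) := by
      rwa [chainLabels, chainVertex_succ_val, hlast, chainVertex_succ_length]
    simpa only [hlast] using hx.succ hmem hT
  · exact hx.elim

theorem HasTraversedChain.of_reachable {S : Fin n → Finset (Fin m)}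
    {lab : Sym2 (GV n m L) → Finset ℕ} {j : Fin m}
    (hreach : TemporallyReachable (inducedTemporal (gadgetEdges n m L S) lab) (GV.t j) GV.r) :
    HasTraversedChain lab := by
  obtain ⟨T, hT⟩ := hreach.exists_of_invariant
    (P := fun x T => HasTraversedChain lab ∨ Progress lab x T) (Or.inr trivial)
    fun _ _ _ _ he hτ => Or.rec Or.inl (progress_step he hτ)
  exact hT.resolve_right id

end Gadget

/-- for any temporal labeling `lab` of the gadget graph, if the terminal
`r` is temporally reachable from the element node `t j`, then some chain is fully
labeled: there is `i ∈ [n]` such that each of the `L+1` chain edges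
`{s_i, w_{i,1}}, {w_{i,1}, w_{i,2}}, …, {w_{i,L}, r}` carries at least one label, and
moreover there are timestamps `τ₀ < τ₁ < ⋯ < τ_L` with `τ₀ ∈ λ({s_i, w_{i,1}})`,
`τ_k ∈ λ({w_{i,k}, w_{i,k+1}})` for `1 ≤ k ≤ L-1`, and `τ_L ∈ λ({w_{i,L}, r})`. -/
theorem reach_forces_full_chain (n m L : ℕ) (hL : 1 ≤ L)
    (S : Fin n → Finset (Fin m))
    (lab : Sym2 (GV n m L) → Finset ℕ) (j : Fin m)
    (hreach : TemporallyReachable (inducedTemporal (gadgetEdges n m L S) lab)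
      (GV.t j) GV.r) :
    ∃ i : Fin n,
      ((lab s(GV.s i, GV.w i ⟨0, by omega⟩)).Nonempty ∧
       (∀ (k : ℕ) (_h1 : 1 ≤ k) (_h2 : k ≤ L - 1),
         (lab s(GV.w i ⟨k - 1, by omega⟩, GV.w i ⟨k, by omega⟩)).Nonempty) ∧
       (lab s(GV.w i ⟨L - 1, by omega⟩, GV.r)).Nonempty) ∧
      ∃ τ : Fin (L + 1) → ℕ, StrictMono τ ∧
        τ 0 ∈ lab s(GV.s i, GV.w i ⟨0, by omega⟩) ∧
        (∀ (k : ℕ) (_h1 : 1 ≤ k) (_h2 : k ≤ L - 1),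
          τ ⟨k, by omega⟩ ∈ lab s(GV.w i ⟨k - 1, by omega⟩, GV.w i ⟨k, by omega⟩)) ∧
        τ ⟨L, by omega⟩ ∈ lab s(GV.w i ⟨L - 1, by omega⟩, GV.r) := by
  obtain ⟨i, T, hi⟩ := HasTraversedChain.of_reachable hreach
  obtain ⟨τ, hτ, hmem, -⟩ := hi.exists_strictMono
  have h0 : τ 0 ∈ lab s(GV.s i, GV.w i ⟨0, by omega⟩) := chainLabels_zero lab i hL ▸ hmem 0
  have hmid : ∀ (k : ℕ) (_h1 : 1 ≤ k) (_h2 : k ≤ L - 1),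
      τ ⟨k, by omega⟩ ∈ lab s(GV.w i ⟨k - 1, by omega⟩, GV.w i ⟨k, by omega⟩) :=
    fun k h1 h2 => chainLabels_of_pos lab i h1 (by omega) ▸ hmem ⟨k, by omega⟩
  have hlast : τ ⟨L, by omega⟩ ∈ lab s(GV.w i ⟨L - 1, by omega⟩, GV.r) :=
    chainLabels_length lab i hL ▸ hmem (Fin.last L)
  exact ⟨i, ⟨⟨_, h0⟩, fun k h1 h2 => ⟨_, hmid k h1 h2⟩, ⟨_, hlast⟩⟩, τ, hτ, h0, hmid, hlast⟩
end
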